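/- Let D be a Krull domain of Krull dimension strictly greater than 1. Then the Zariski space Zar(D) is not a Noetherian topological space. -/

import Mathlib

/-- The Zariski topology on the set of valuation subrings of a field `K`. -/
instance zariskiTopology (K : Type*) [Field K] : TopologicalSpace (ValuationSubring K) :=
  TopologicalSpace.generateFrom {U | ∃ x : K, U = {V : ValuationSubring K | x ∈ V}}

/-- The Zariski space `Zar(D)`: valuation subrings of `K` containing the image of `D`. -/
def zarSet (D K : Type*) [CommRing D] [Field K] [Algebra D K] : Set (ValuationSubring K) :=
  {V | ∀ d : D, algebraMap D K d ∈ V}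


/-- The localization `D_P` of `D` at a prime `P`, viewed as a subalgebra of the
fraction field `K` (with the primality assumption given explicitly). -/
noncomputable def locAt (D K : Type*) [CommRing D] [IsDomain D] [Field K] [Algebra D K]
    [IsFractionRing D K] (P : Ideal D) (hP : P.IsPrime) : Subalgebra D K :=
  Localization.subalgebra K (@Ideal.primeCompl D _ P hP)
    (@Ideal.primeCompl_le_nonZeroDivisors D _ _ P hP)

/-- `P` is a height-one prime of `D`. -/
def IsHeightOnePrime {D : Type*} [CommRing D] (P : Ideal D) : Prop :=
  P.IsPrime ∧ P ≠ ⊥ ∧ ∀ Q : Ideal D, Q.IsPrime → Q < P → Q = ⊥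

/-- `D` is a Krull domain: all localizations at height-one primes are discrete valuation
rings, `D` is the intersection of these localizations inside its fraction field `K`, and
every nonzero element lies in only finitely many height-one primes. -/
def IsKrullDomain (D K : Type*) [CommRing D] [IsDomain D] [Field K] [Algebra D K]
    [IsFractionRing D K] : Prop :=
  (∀ (P : Ideal D) (hP : IsHeightOnePrime P), IsDiscreteValuationRing (locAt D K P hP.1)) ∧
  (∀ x : K, (∀ (P : Ideal D) (hP : IsHeightOnePrime P), x ∈ locAt D K P hP.1) →
    ∃ d : D, x = algebraMap D K d) ∧
  (∀ d : D, d ≠ 0 → {P : Ideal D | IsHeightOnePrime P ∧ d ∈ P}.Finite)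

/-!
Pick a prime `Q` of height at least two, a nonzero `q ∈ Q`, and, by prime avoidance, `t ∈ Q`
outside the finitely many height-one primes containing `q`. For each `n`, some height-one prime
`P ⊆ Q` contains `q ^ (n + 1) - t`. Then `u = q ^ (n + 1) / t` is a unit of `D_P` congruent to `1`
modulo `P D_P`, so the ring `D + P D_P` contains `u` and `u⁻¹`, while `q` is not invertible there
because `q` is not invertible modulo `P ⊆ Q`. A valuation ring dominating `D + P D_P` at a maximal
ideal containing `q` contains `q ^ (n + 1) / t` but none of the `q ^ i / t` with `i ≤ n`. Hence the
open sets `{V | ∃ i ≤ n, q ^ i / t ∈ V}` of `Zar(D)` increase strictly.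
-/

open Filter IsLocalRing

theorem TopologicalSpace.not_noetherianSpace_of_strictMono {X : Type*} [TopologicalSpace X]
    {s : ℕ → Set X} (hs : ∀ n, IsOpen (s n)) (hmono : StrictMono s) : ¬ NoetherianSpace X :=
  fun _ => not_strictMono_of_wellFoundedGT (fun n => (⟨s n, hs n⟩ : Opens X))
    fun _ _ h => hmono h

theorem isOpen_setOf_mem_valuationSubring {K : Type*} [Field K] (x : K) :
    IsOpen {V : ValuationSubring K | x ∈ V} :=
  TopologicalSpace.isOpen_generateFrom_of_mem ⟨x, rfl⟩

theorem IsDiscreteValuationRing.eventually_dvd_pow {R : Type*} [CommRing R] [IsDomain R]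
    [IsDiscreteValuationRing R] {a b : R} (ha : a ≠ 0) (hb : ¬ IsUnit b) :
    ∀ᶠ n in atTop, a ∣ b ^ n := by
  obtain ⟨π, hπ⟩ := exists_irreducible R
  obtain ⟨m, hm⟩ := associated_pow_irreducible ha hπ
  have hπb : π ∣ b := by
    rw [← Ideal.mem_span_singleton, ← (irreducible_iff_uniformizer π).mp hπ]
    exact hb
  filter_upwards [eventually_ge_atTop m] with n hn
  exact hm.dvd.trans ((pow_dvd_pow π hn).trans (pow_dvd_pow_of_dvd hπb n))

theorem exists_isPrime_forall_not_le_isHeightOnePrime {D : Type*} [CommRing D]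
    (hdim : 1 < ringKrullDim D) :
    ∃ Q : Ideal D, Q.IsPrime ∧ Q ≠ ⊥ ∧ ∀ P : Ideal D, IsHeightOnePrime P → ¬ Q ≤ P := by
  obtain ⟨p, hpmin, hpmax⟩ : ∃ p : PrimeSpectrum D, ¬ IsMin p ∧ ¬ IsMax p := by
    by_contra! h
    exact hdim.not_ge (Order.krullDim_le_one_iff.mpr fun p => or_iff_not_imp_left.mpr (h p))
  obtain ⟨o, hop⟩ := not_isMin_iff.mp hpmin
  obtain ⟨Q, hpQ⟩ := not_isMax_iff.mp hpmax
  have hop' : o.asIdeal < p.asIdeal := hop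
  have hpQ' : p.asIdeal < Q.asIdeal := hpQ
  have hp0 : p.asIdeal ≠ ⊥ := (bot_le.trans_lt hop').ne'
  exact ⟨Q.asIdeal, Q.isPrime, (bot_le.trans_lt hpQ').ne',
    fun P hP hQP => hp0 (hP.2.2 _ p.isPrime (hpQ'.trans_le hQP))⟩

section KrullDomain

variable {D K : Type*} [CommRing D] [IsDomain D] [Field K] [Algebra D K] [IsFractionRing D K]

instance locAt.isLocalization (P : Ideal D) [hP : P.IsPrime] :
    IsLocalization.AtPrime (locAt D K P hP) P :=
  Localization.subalgebra.isLocalization_subalgebra _ _ _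

instance locAt.isLocalRing (P : Ideal D) [hP : P.IsPrime] : IsLocalRing (locAt D K P hP) :=
  IsLocalization.AtPrime.isLocalRing _ P

namespace IsKrullDomain

theorem dvd_of_forall_dvd (hK : IsKrullDomain D K) {s d : D} (hs : s ≠ 0)
    (h : ∀ (P : Ideal D) (hP : IsHeightOnePrime P),
      algebraMap D (locAt D K P hP.1) s ∣ algebraMap D (locAt D K P hP.1) d) : s ∣ d := by
  have hs' : algebraMap D K s ≠ 0 := by simpa using hs
  obtain ⟨w, hw⟩ := hK.2.1 (algebraMap D K d / algebraMap D K s) fun P hP => by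
    obtain ⟨c, hc⟩ := h P hP
    have hc' : algebraMap D K d = algebraMap D K s * c := by simpa using congrArg Subtype.val hc
    rw [hc', mul_div_cancel_left₀ _ hs']
    exact c.2
  refine ⟨w, IsFractionRing.injective D K ?_⟩
  rw [map_mul, ← hw]
  field_simp

theorem exists_isHeightOnePrime_le (hK : IsKrullDomain D K) {Q : Ideal D} (hQ : Q.IsPrime)
    {s : D} (hsQ : s ∈ Q) (hs : s ≠ 0) : ∃ P : Ideal D, IsHeightOnePrime P ∧ P ≤ Q ∧ s ∈ P := by
  -- Otherwise a product `d ∉ Q` of elements of the `P ∋ s` has a power divisible by `s` in every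
  -- DVR `D_P`, hence in `D`.
  by_contra! hcon
  set F := {P : Ideal D | IsHeightOnePrime P ∧ s ∈ P}
  have hF : F.Finite := hK.2.2 s hs
  have hFQ : ∀ P ∈ F, ∃ f ∈ P, f ∉ Q := fun P hP =>
    SetLike.not_le_iff_exists.mp fun hPQ => hcon P hP.1 hPQ hP.2
  choose! f hfP hfQ using hFQ
  set d := ∏ P ∈ hF.toFinset, f P
  have hdQ : d ∉ Q := fun hd => by
    obtain ⟨P, hP, hfP⟩ := hQ.prod_mem_iff.mp hd
    exact hfQ P (hF.mem_toFinset.mp hP) hfP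
  have hdP : ∀ P ∈ F, d ∈ P := fun P hP =>
    Ideal.mem_of_dvd _ (Finset.dvd_prod_of_mem f (hF.mem_toFinset.mpr hP)) (hfP P hP)
  have hdvd : ∀ᶠ m in atTop, ∀ P ∈ F, ∀ hP : IsHeightOnePrime P,
      algebraMap D (locAt D K P hP.1) s ∣ algebraMap D (locAt D K P hP.1) (d ^ m) := by
    refine hF.eventually_all.mpr fun P hPF => ?_
    have hP : IsHeightOnePrime P := hPF.1
    have := hP.1
    have := hK.1 P hP
    have hs' : algebraMap D (locAt D K P hP.1) s ≠ 0 := by simpa using hs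
    have hd' : ¬ IsUnit (algebraMap D (locAt D K P hP.1) d) := by
      rw [IsLocalization.AtPrime.isUnit_to_map_iff _ P]
      exact not_not.mpr (hdP P hPF)
    simpa only [map_pow] using
      (IsDiscreteValuationRing.eventually_dvd_pow hs' hd').mono fun _ h _ => h
  obtain ⟨m, hm⟩ := hdvd.exists
  obtain ⟨c, hc⟩ := hK.dvd_of_forall_dvd hs fun P hP => by
    have := hP.1
    by_cases hsP : s ∈ P
    · exact hm P ⟨hP, hsP⟩ hP
    · exact ((IsLocalization.AtPrime.isUnit_to_map_iff _ P s).mpr hsP).dvd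
  exact hdQ (hQ.mem_of_pow_mem m (hc ▸ Q.mul_mem_right c hsQ))

theorem exists_mem_forall_notMem (hK : IsKrullDomain D K) {Q : Ideal D}
    (hQ : ∀ P : Ideal D, IsHeightOnePrime P → ¬ Q ≤ P) {q : D} (hq : q ≠ 0) :
    ∃ t ∈ Q, ∀ P : Ideal D, IsHeightOnePrime P → q ∈ P → t ∉ P := by
  have hF := hK.2.2 q hq
  have hQF : ¬ (Q : Set D) ⊆ ⋃ P ∈ (hF.toFinset : Set (Ideal D)), (P : Set D) := by
    rw [Ideal.subset_union_prime ⊥ ⊥ fun P hP _ _ => (hF.mem_toFinset.mp hP).1.1]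
    rintro ⟨P, hP, hQP⟩
    exact hQ P (hF.mem_toFinset.mp hP).1 hQP
  obtain ⟨t, htQ, ht⟩ := Set.not_subset.mp hQF
  exact ⟨t, htQ, fun P hP hqP htP =>
    ht (Set.mem_biUnion (hF.mem_toFinset.mpr ⟨hP, hqP⟩) htP)⟩

end IsKrullDomain

section Pullback

variable (D K) in
/-- The ring `D + P D_P`: elements of `D_P` whose residue class modulo `P D_P` comes from `D`. -/
noncomputable def locAtPullback (P : Ideal D) [hP : P.IsPrime] : Subring K :=
  ((algebraMap D (ResidueField (locAt D K P hP))).range.comap (residue _)).map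
    ((locAt D K P hP).val : locAt D K P hP →+* K)

variable (P : Ideal D) [hP : P.IsPrime]

theorem mem_locAtPullback_iff {x : K} : x ∈ locAtPullback D K P ↔
    ∃ (y : locAt D K P hP) (d : D), y - algebraMap D _ d ∈ maximalIdeal _ ∧ (y : K) = x := by
  simp only [locAtPullback, Subring.mem_map, Subring.mem_comap, RingHom.mem_range,
    IsScalarTower.algebraMap_apply D (locAt D K P hP) (ResidueField _), ResidueField.algebraMap_eq]
  refine ⟨fun ⟨y, ⟨d, hd⟩, hy⟩ => ⟨y, d, ?_, hy⟩, fun ⟨y, d, hd, hy⟩ => ⟨y, ⟨d, ?_⟩, hy⟩⟩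
  · rwa [← residue_eq_zero_iff, map_sub, sub_eq_zero, eq_comm]
  · rwa [← residue_eq_zero_iff, map_sub, sub_eq_zero, eq_comm] at hd

theorem algebraMap_mem_locAtPullback (d : D) : algebraMap D K d ∈ locAtPullback D K P :=
  (mem_locAtPullback_iff P).mpr ⟨algebraMap D _ d, d, by simp, by simp⟩

theorem div_mem_locAtPullback {a b : D} (hb : b ∉ P) (hab : a - b ∈ P) :
    algebraMap D K a / algebraMap D K b ∈ locAtPullback D K P := by
  set y := IsLocalization.mk' (locAt D K P hP) a (⟨b, hb⟩ : P.primeCompl)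
  have hy : y * algebraMap D _ b = algebraMap D _ a := IsLocalization.mk'_spec _ _ _
  refine (mem_locAtPullback_iff P).mpr ⟨y, 1, ?_, ?_⟩
  · have : y - algebraMap D _ 1 =
        algebraMap D _ (a - b) * IsLocalization.mk' _ 1 (⟨b, hb⟩ : P.primeCompl) := by
      have hy' : y = algebraMap D _ a * IsLocalization.mk' _ 1 (⟨b, hb⟩ : P.primeCompl) :=
        IsLocalization.mk'_eq_mul_mk'_one _ _
      have hb1 := IsLocalization.mk'_spec' (locAt D K P hP) 1 (⟨b, hb⟩ : P.primeCompl)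
      rw [map_one] at hb1
      rw [map_one, map_sub]
      linear_combination hy' + hb1
    rw [this]
    exact Ideal.mul_mem_right _ _ ((IsLocalization.AtPrime.to_map_mem_maximal_iff _ P _).mpr hab)
  · have hb' : algebraMap D K b ≠ 0 := by
      simpa using (ne_of_mem_of_not_mem P.zero_mem hb).symm
    rw [eq_div_iff hb']
    simpa using congrArg Subtype.val hy

theorem not_isUnit_locAtPullback {Q : Ideal D} (hPQ : P ≤ Q) (hQ : Q ≠ ⊤) {q : D} (hq : q ∈ Q) :
    ¬ IsUnit (⟨algebraMap D K q, algebraMap_mem_locAtPullback P q⟩ : locAtPullback D K P) := by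
  intro h
  obtain ⟨w, hw⟩ := isUnit_iff_exists_inv.mp h
  obtain ⟨y, d, hyd, hy⟩ := (mem_locAtPullback_iff P).mp w.2
  have hqy : algebraMap D _ q * y = 1 := Subtype.ext (by simpa [hy] using congrArg Subtype.val hw)
  have h1 : 1 - q * d ∈ P := by
    rw [← IsLocalization.AtPrime.to_map_mem_maximal_iff (locAt D K P hP) P]
    have : algebraMap D (locAt D K P hP) (1 - q * d) =
        algebraMap D _ q * (y - algebraMap D _ d) := by
      rw [map_sub, map_one, map_mul, mul_sub, hqy]
    rw [this]
    exact Ideal.mul_mem_left _ _ hyd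
  exact hQ ((Q.eq_top_iff_one).mpr (by simpa using Q.add_mem (hPQ h1) (Q.mul_mem_right d hq)))

end Pullback

theorem exists_valuationSubring_div_mem_of_sub_mem {P Q : Ideal D} [P.IsPrime] (hPQ : P ≤ Q)
    (hQ : Q ≠ ⊤) {a b q : D} (ha : a ∉ P) (hab : a - b ∈ P) (hq : q ∈ Q) :
    ∃ V : ValuationSubring K, V ∈ zarSet D K ∧ algebraMap D K a / algebraMap D K b ∈ V ∧
      algebraMap D K b / algebraMap D K a ∈ V ∧ algebraMap D K q ∈ V.nonunits := by
  have hb : b ∉ P := fun hb => ha (by simpa using P.add_mem hab hb)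
  obtain ⟨V, hTV, hqV⟩ := Ideal.image_subset_nonunits_valuationSubring
    (Ideal.span {⟨algebraMap D K q, algebraMap_mem_locAtPullback P q⟩})
    (by rw [Ne, Ideal.span_singleton_eq_top]; exact not_isUnit_locAtPullback P hPQ hQ hq)
  exact ⟨V, fun d => hTV (algebraMap_mem_locAtPullback P d), hTV (div_mem_locAtPullback P hb hab),
    hTV (div_mem_locAtPullback P ha (by simpa using P.neg_mem hab)),
    hqV ⟨_, Ideal.mem_span_singleton_self _, rfl⟩⟩

theorem IsKrullDomain.exists_mem_zarSet_pow_div (hK : IsKrullDomain D K) {Q : Ideal D}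
    (hQ : Q.IsPrime) {q t : D} (hqQ : q ∈ Q) (hq : q ≠ 0) (htQ : t ∈ Q)
    (ht : ∀ P : Ideal D, IsHeightOnePrime P → q ∈ P → t ∉ P) (n : ℕ) :
    ∃ V ∈ zarSet D K, algebraMap D K q ^ (n + 1) / algebraMap D K t ∈ V ∧
      ∀ i ≤ n, algebraMap D K q ^ i / algebraMap D K t ∉ V := by
  have hs : q ^ (n + 1) - t ≠ 0 := fun h => by
    obtain ⟨P, hP, -, hqP⟩ := hK.exists_isHeightOnePrime_le hQ hqQ hq
    exact ht P hP hqP (sub_eq_zero.mp h ▸ P.pow_mem_of_mem hqP _ n.succ_pos)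
  obtain ⟨P, hP, hPQ, hsP⟩ := hK.exists_isHeightOnePrime_le hQ
    (Q.sub_mem (Q.pow_mem_of_mem hqQ _ n.succ_pos) htQ) hs
  have := hP.1
  have hqP : q ∉ P := fun hqP =>
    ht P hP hqP (by simpa using P.sub_mem (P.pow_mem_of_mem hqP _ n.succ_pos) hsP)
  have htP : t ∉ P := fun htP => hqP (hP.1.mem_of_pow_mem _ (by simpa using P.add_mem hsP htP))
  obtain ⟨V, hDV, huV, hu'V, hqV⟩ := exists_valuationSubring_div_mem_of_sub_mem (K := K) hPQ
    hQ.ne_top (fun h => hqP (hP.1.mem_of_pow_mem _ h)) hsP hqQ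
  refine ⟨V, hDV, by simpa using huV, fun i hi hiV => ?_⟩
  have hq' : algebraMap D K q ≠ 0 := by simpa using hq
  have ht' : algebraMap D K t ≠ 0 := by
    simpa using (ne_of_mem_of_not_mem P.zero_mem htP).symm
  obtain ⟨k, rfl⟩ := Nat.exists_eq_add_of_le hi
  have hinv : (algebraMap D K q)⁻¹ = algebraMap D K q ^ i / algebraMap D K t *
      (algebraMap D K t / algebraMap D K q ^ (i + k + 1)) * algebraMap D K q ^ k := by
    field_simp
    ring
  refine ((V.mem_nonunits_iff_or.mp hqV).resolve_left hq') ?_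
  rw [hinv]
  exact mul_mem (mul_mem hiV (by simpa using hu'V)) (pow_mem (hDV q) k)

end KrullDomain

theorem stmt14 (D K : Type*) [CommRing D] [IsDomain D] [Field K] [Algebra D K]
    [IsFractionRing D K] (hKrull : IsKrullDomain D K) (hdim : 1 < ringKrullDim D) :
    ¬ TopologicalSpace.NoetherianSpace (zarSet D K) := by
  obtain ⟨Q, hQ, hQ0, hQP⟩ := exists_isPrime_forall_not_le_isHeightOnePrime hdim
  obtain ⟨q, hqQ, hq⟩ := Submodule.exists_mem_ne_zero_of_ne_bot hQ0
  obtain ⟨t, htQ, ht⟩ := hKrull.exists_mem_forall_notMem hQP hq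
  set y : ℕ → K := fun i => algebraMap D K q ^ i / algebraMap D K t
  refine TopologicalSpace.not_noetherianSpace_of_strictMono
    (s := fun n => ⋃ i ∈ Set.Iic n, Subtype.val ⁻¹' {V : ValuationSubring K | y i ∈ V})
    (fun n => isOpen_biUnion fun i _ =>
      (isOpen_setOf_mem_valuationSubring (y i)).preimage continuous_subtype_val)
    (strictMono_nat_of_lt_succ fun n => ?_)
  obtain ⟨V, hVD, hV, hV'⟩ := hKrull.exists_mem_zarSet_pow_div hQ hqQ hq htQ ht n
  refine (Set.ssubset_iff_of_subset (Set.biUnion_subset_biUnion_left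
    (Set.Iic_subset_Iic.mpr n.le_succ))).mpr ⟨⟨V, hVD⟩, Set.mem_biUnion Set.self_mem_Iic hV, ?_⟩
  simpa [y] using hV'
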